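/- arXiv:2512.02211 — 2 statements merged into one kernel-verified Lean document; each statement's English description precedes it below -/
import Mathlib

section
/- Let G be a finite F-group and a, b ∈ G \ Z(G) with b ∉ Z(C_G(a)). Then Z(C_G(a)) ∩ Z(C_G(b)) = Z(G). -/
variable {G : Type*} [Group G] [Fintype G]

/-- The centralizer of an element `g` of `G`. -/
def centG (g : G) : Subgroup G := Subgroup.centralizer ({g} : Set G)

/-- `Z(g) = Z(C_G(g))`, the center of the centralizer of `g`, as a subgroup of `G`. -/
def zCent (g : G) : Subgroup G :=
  (Subgroup.center ↥(Subgroup.centralizer ({g} : Set G))).map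
    (Subgroup.centralizer ({g} : Set G)).subtype

lemma mem_zCent {g x : G} :
    x ∈ zCent g ↔ x ∈ centG g ∧ ∀ y ∈ centG g, y * x = x * y := by
  unfold zCent centG
  constructor
  · rintro ⟨⟨x, hx⟩, hc, rfl⟩
    refine ⟨hx, fun y hy => ?_⟩
    have := Subgroup.mem_center_iff.mp hc ⟨y, hy⟩
    exact congrArg Subtype.val this
  · rintro ⟨hx, hc⟩
    exact ⟨⟨x, hx⟩, Subgroup.mem_center_iff.mpr fun ⟨y, hy⟩ => Subtype.ext (hc y hy), rfl⟩

lemma self_mem_zCent (g : G) : g ∈ zCent g := by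
  rw [mem_zCent]
  refine ⟨Subgroup.mem_centralizer_iff.mpr (by simp), fun y hy => ?_⟩
  have := Subgroup.mem_centralizer_iff.mp hy g rfl
  exact this.symm

lemma center_le_zCent (g : G) : Subgroup.center G ≤ zCent g := by
  intro z hz
  rw [mem_zCent]
  have hz' := Subgroup.mem_center_iff.mp hz
  exact ⟨Subgroup.mem_centralizer_iff.mpr (fun h hh => hz' h), fun y _ => hz' y⟩

lemma cent_le_of_mem_zCent {g x : G} (h : x ∈ zCent g) : centG g ≤ centG x := by
  rw [mem_zCent] at h
  intro y hy
  exact Subgroup.mem_centralizer_iff.mpr (by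
    rintro h' rfl
    exact (h.2 y hy).symm)

lemma zCent_eq_of_cent_eq {g h : G} (e : centG g = centG h) : zCent g = zCent h := by
  ext x
  rw [mem_zCent, mem_zCent, e]

theorem stmt_15
    (hF : ∀ x y : G, x ∉ Subgroup.center G → y ∉ Subgroup.center G →
      centG x ≤ centG y → centG x = centG y)
    (a b : G) (ha : a ∉ Subgroup.center G) (hb : b ∉ Subgroup.center G)
    (hba : b ∉ zCent a) :
    zCent a ⊓ zCent b = Subgroup.center G := by
  apply le_antisymm
  · rintro x ⟨hxa, hxb⟩
    by_contra hx
    have e1 : centG a = centG x := hF a x ha hx (cent_le_of_mem_zCent hxa)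
    have e2 : centG b = centG x := hF b x hb hx (cent_le_of_mem_zCent hxb)
    have : zCent a = zCent b := zCent_eq_of_cent_eq (e1.trans e2.symm)
    exact hba (this ▸ self_mem_zCent b)
  · exact le_inf (center_le_zCent a) (center_le_zCent b)
end

section
/- Let G be a finite nonabelian group. Then G is an F-group if and only if the sets Z(C_G(g)) \ Z(G), as Z(C_G(g)) ranges over the distinct members of 𝒵(G) = {Z(C_G(x)) : x ∈ G \ Z(G)}, form a partition of G \ Z(G): their union is G \ Z(G) and any two distinct such sets are disjoint. -/
variable {G : Type*} [Group G] [Fintype G]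

lemma mem_zCent_iff (g x : G) : x ∈ zCent g ↔ centG g ≤ centG x := by
  constructor
  · rintro ⟨⟨y, hy⟩, hyc, rfl⟩
    intro z hz
    simp only [centG, Subgroup.mem_centralizer_iff, Set.mem_singleton_iff] at *
    intro h hh; subst hh
    have := (Subgroup.mem_center_iff.mp hyc) ⟨z, hz⟩
    exact (Subtype.ext_iff.mp this).symm
  · intro h
    have hg : g ∈ centG g := by
      simp [centG, Subgroup.mem_centralizer_iff]
    have hx : x ∈ Subgroup.centralizer ({g} : Set G) := by
      have := h hg
      simp only [centG, Subgroup.mem_centralizer_iff, Set.mem_singleton_iff,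
        forall_eq] at this ⊢
      exact this.symm
    refine ⟨⟨x, hx⟩, Subgroup.mem_center_iff.mpr ?_, rfl⟩
    rintro ⟨z, hz⟩
    have := h hz
    simp only [centG, Subgroup.mem_centralizer_iff, Set.mem_singleton_iff,
      forall_eq] at this
    exact Subtype.ext this.symm

theorem stmt_18 (hna : ∃ a b : G, a * b ≠ b * a) :
    (∀ x y : G, x ∉ Subgroup.center G → y ∉ Subgroup.center G →
        centG x ≤ centG y → centG x = centG y) ↔
      ((∀ x : G, x ∉ Subgroup.center G →
          ∃ g : G, g ∉ Subgroup.center G ∧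
            x ∈ (zCent g : Set G) \ (Subgroup.center G : Set G)) ∧
       ∀ g h : G, g ∉ Subgroup.center G → h ∉ Subgroup.center G → zCent g ≠ zCent h →
         Disjoint ((zCent g : Set G) \ (Subgroup.center G : Set G))
           ((zCent h : Set G) \ (Subgroup.center G : Set G))) := by
  constructor
  · intro F
    refine ⟨fun x hx => ⟨x, hx, ⟨(mem_zCent_iff x x).mpr le_rfl, hx⟩⟩, ?_⟩
    intro g h hg hh hne
    rw [Set.disjoint_left]
    rintro x ⟨hxg, hxz⟩ ⟨hxh, _⟩
    have h1 : centG g = centG x := F g x hg hxz ((mem_zCent_iff g x).mp hxg)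
    have h2 : centG h = centG x := F h x hh hxz ((mem_zCent_iff h x).mp hxh)
    exact hne (zCent_eq_of_cent_eq (h1.trans h2.symm))
  · rintro ⟨_, D⟩ x y hx hy hle
    have hy1 : y ∈ (zCent x : Set G) \ (Subgroup.center G : Set G) :=
      ⟨(mem_zCent_iff x y).mpr hle, hy⟩
    have hy2 : y ∈ (zCent y : Set G) \ (Subgroup.center G : Set G) :=
      ⟨(mem_zCent_iff y y).mpr le_rfl, hy⟩
    by_contra hne
    have hz : zCent x = zCent y := by
      by_contra hzne
      exact Set.disjoint_left.mp (D x y hx hy hzne) hy1 hy2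
    have : x ∈ zCent y := hz ▸ (mem_zCent_iff x x).mpr le_rfl
    exact hne (le_antisymm hle ((mem_zCent_iff y x).mp this))
end
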